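/- arXiv:1910.03117 — 6 statements merged into one kernel-verified Lean document; each statement's English description precedes it below -/
import Mathlib

section
/- Assume additionally that 0 < μ([0,t]) < 1 for every t ∈ (0,1) (the support of μ is [0,1]). Then the posterior cdfs at the signals z' = 1 and z'' = 2 satisfy: F(w|2) = μ([0,w]) for every w ∈ [0,1], and F(w|1) < F(w|2) for every w ∈ (0,1). That is, the posterior distribution given the LOWER signal 1 strictly first-order stochastically dominates the posterior distribution given the HIGHER signal 2, which in turn equals the prior. -/
open MeasureTheory Set

/-- The signal density `f(z,x)`: a right-angled triangle on `[x, x+1)`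
followed by a rectangle of height `1/3` on `[x+1, x+2]`. -/
noncomputable def sigDen (z x : ℝ) : ℝ :=
  if x ≤ z ∧ z < x + 1 then 1 - (2 / 3) * (z - x)
  else if x + 1 ≤ z ∧ z ≤ x + 2 then 1 / 3
  else 0

/-- The posterior cdf of `X` given the signal realization `Z = z`. -/
noncomputable def postCdf (μ : Measure ℝ) (w z : ℝ) : ℝ :=
  (∫ x in Icc (0 : ℝ) w, sigDen z x ∂μ) / (∫ x in Icc (0 : ℝ) 1, sigDen z x ∂μ)

/-!
On `[0,1]` the likelihood `f(2,·)` is the constant `1/3`, so the signal `2` carries no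
information. The likelihood `g x = f(1,x) = 1/3 + 2x/3` is strictly increasing, so reweighting
the prior by `g` moves mass upward: `∫_{[0,w]} g dμ ≤ g(w) μ[0,w]` while
`∫_{(w,1]} g dμ > g(w) μ(w,1]` once `(w,1]` carries prior mass, and cross-multiplying gives
`F(w|1) < μ[0,w]`.
-/

section Reweighting

variable {μ : Measure ℝ} {g : ℝ → ℝ} {a w b : ℝ}

theorem setIntegral_Icc_mul_measureReal_lt [IsFiniteMeasure μ] (hg : StrictMonoOn g (Icc a b))
    (haw : a ≤ w) (hwb : w ≤ b) (hA : μ (Icc a w) ≠ 0) (hB : μ (Ioc w b) ≠ 0) :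
    (∫ x in Icc a w, g x ∂μ) * μ.real (Ioc w b) <
      (∫ x in Ioc w b, g x ∂μ) * μ.real (Icc a w) := by
  have hint : IntegrableOn g (Icc a b) μ := hg.monotoneOn.integrableOn_isCompact isCompact_Icc
  have hintB : IntegrableOn g (Ioc w b) μ :=
    hint.mono_set (Ioc_subset_Icc_self.trans (Icc_subset_Icc_left haw))
  have hlow : ∫ x in Icc a w, g x ∂μ ≤ μ.real (Icc a w) * g w := by
    rw [← smul_eq_mul, ← setIntegral_const]
    exact setIntegral_mono_on (hint.mono_set (Icc_subset_Icc_right hwb)) integrableOn_const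
      measurableSet_Icc fun x hx => hg.monotoneOn ⟨hx.1, hx.2.trans hwb⟩ ⟨haw, hwb⟩ hx.2
  have hhigh : μ.real (Ioc w b) * g w < ∫ x in Ioc w b, g x ∂μ := by
    have hgt : ∀ x ∈ Ioc w b, g w < g x := fun x hx =>
      hg ⟨haw, hwb⟩ ⟨haw.trans hx.1.le, hx.2⟩ hx.1
    have hpos : 0 < ∫ x in Ioc w b, (g x - g w) ∂μ := by
      rw [setIntegral_pos_iff_support_of_nonneg_ae (f := fun x => g x - g w) _
        (hintB.sub integrableOn_const)]
      · rwa [inter_eq_right.2 fun x hx => Function.mem_support.2 (sub_ne_zero.2 (hgt x hx).ne'),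
          pos_iff_ne_zero]
      · exact (ae_restrict_iff' measurableSet_Ioc).2 <|
          ae_of_all _ fun x hx => sub_nonneg.2 (hgt x hx).le
    rwa [integral_sub hintB integrableOn_const, setIntegral_const, smul_eq_mul, sub_pos] at hpos
  have hApos : 0 < μ.real (Icc a w) := ENNReal.toReal_pos hA (measure_ne_top μ _)
  calc (∫ x in Icc a w, g x ∂μ) * μ.real (Ioc w b)
      ≤ μ.real (Icc a w) * g w * μ.real (Ioc w b) :=
        mul_le_mul_of_nonneg_right hlow measureReal_nonneg
    _ = μ.real (Ioc w b) * g w * μ.real (Icc a w) := by ring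
    _ < (∫ x in Ioc w b, g x ∂μ) * μ.real (Icc a w) := mul_lt_mul_of_pos_right hhigh hApos

theorem setIntegral_Icc_div_lt_measureReal [IsFiniteMeasure μ] (hg : StrictMonoOn g (Icc a b))
    (hga : 0 ≤ g a) (hμ : μ (Icc a b) = 1) (haw : a ≤ w) (hwb : w ≤ b)
    (hA : 0 < μ (Icc a w)) (hA1 : μ (Icc a w) < 1) :
    (∫ x in Icc a w, g x ∂μ) / (∫ x in Icc a b, g x ∂μ) < μ.real (Icc a w) := by
  have hint : IntegrableOn g (Icc a b) μ := hg.monotoneOn.integrableOn_isCompact isCompact_Icc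
  have hsplit : Icc a w ∪ Ioc w b = Icc a b := Icc_union_Ioc_eq_Icc haw hwb
  have hdisj : Disjoint (Icc a w) (Ioc w b) :=
    (Iic_disjoint_Ioc le_rfl).mono_left Icc_subset_Iic_self
  have hB : μ (Ioc w b) ≠ 0 := fun h => by
    rw [← hsplit, measure_union hdisj measurableSet_Ioc, h, add_zero] at hμ
    exact hA1.ne hμ
  have hmass : μ.real (Icc a w) + μ.real (Ioc w b) = 1 := by
    rw [← measureReal_union hdisj measurableSet_Ioc, hsplit, measureReal_def, hμ,
      ENNReal.toReal_one]
  have hkey := setIntegral_Icc_mul_measureReal_lt hg haw hwb hA.ne' hB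
  have hIA : 0 ≤ ∫ x in Icc a w, g x ∂μ := setIntegral_nonneg measurableSet_Icc fun x hx =>
    hga.trans (hg.monotoneOn ⟨le_rfl, haw.trans hwb⟩ ⟨hx.1, hx.2.trans hwb⟩ hx.1)
  have hIB : 0 < ∫ x in Ioc w b, g x ∂μ :=
    pos_of_mul_pos_left ((mul_nonneg hIA measureReal_nonneg).trans_lt hkey) measureReal_nonneg
  rw [← hsplit] at hint ⊢
  rw [setIntegral_union hdisj measurableSet_Ioc (hint.mono_set subset_union_left)
    (hint.mono_set subset_union_right), div_lt_iff₀ (by linarith)]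
  linear_combination hkey - (∫ x in Icc a w, g x ∂μ) * hmass

end Reweighting

theorem sigDen_two_eqOn : EqOn (sigDen 2) (fun _ => 1 / 3) (Icc 0 1) := by
  rintro x ⟨hx0, hx1⟩
  unfold sigDen
  split_ifs with h₁ h₂
  · linarith [h₁.2]
  · rfl
  · exact absurd ⟨by linarith, by linarith⟩ h₂

theorem sigDen_one_eqOn : EqOn (sigDen 1) (fun x => 1 / 3 + 2 / 3 * x) (Icc 0 1) := by
  rintro x ⟨hx0, hx1⟩
  unfold sigDen
  split_ifs with h₁ h₂
  · ring
  · obtain rfl : x = 0 := by linarith [not_lt.1 (not_and.1 h₁ hx1)]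
    norm_num
  · exact absurd ⟨not_lt.1 (not_and.1 h₁ hx1), by linarith⟩ h₂

theorem postCdf_eq_of_eqOn {μ : Measure ℝ} {g : ℝ → ℝ} {w z : ℝ} (hw : w ≤ 1)
    (hg : EqOn (sigDen z) g (Icc 0 1)) :
    postCdf μ w z = (∫ x in Icc 0 w, g x ∂μ) / ∫ x in Icc 0 1, g x ∂μ := by
  rw [postCdf, setIntegral_congr_fun measurableSet_Icc (hg.mono (Icc_subset_Icc_right hw)),
    setIntegral_congr_fun measurableSet_Icc hg]

/-- If the prior `μ` has support `[0,1]` (so `0 < μ([0,t]) < 1` for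
`t ∈ (0,1)`), then the posterior given signal `z'' = 2` equals the prior,
and the posterior given the lower signal `z' = 1` strictly first-order
stochastically dominates it: `F(w|1) < F(w|2)` for all `w ∈ (0,1)`. -/
theorem stmt_0 (μ : Measure ℝ) [IsProbabilityMeasure μ]
    (hμ : μ (Icc (0 : ℝ) 1) = 1)
    (hsupp : ∀ t ∈ Ioo (0 : ℝ) 1, 0 < μ (Icc 0 t) ∧ μ (Icc 0 t) < 1) :
    (∀ w ∈ Icc (0 : ℝ) 1, postCdf μ w 2 = (μ (Icc 0 w)).toReal) ∧
    (∀ w ∈ Ioo (0 : ℝ) 1, postCdf μ w 1 < postCdf μ w 2) := by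
  have hprior : ∀ w ∈ Icc (0 : ℝ) 1, postCdf μ w 2 = (μ (Icc 0 w)).toReal := fun w hw => by
    rw [postCdf_eq_of_eqOn hw.2 sigDen_two_eqOn, setIntegral_const, setIntegral_const,
      measureReal_def μ (Icc 0 1), hμ]
    simp [measureReal_def]
  refine ⟨hprior, fun w hw => ?_⟩
  rw [hprior w (Ioo_subset_Icc_self hw), postCdf_eq_of_eqOn hw.2.le sigDen_one_eqOn]
  have hg : StrictMono fun x : ℝ => 1 / 3 + 2 / 3 * x := fun x y hxy => by linarith
  exact setIntegral_Icc_div_lt_measureReal (hg.strictMonoOn _) (by norm_num) hμ hw.1.le hw.2.le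
    (hsupp w hw).1 (hsupp w hw).2
end

section
/- Assume μ is not a Dirac point mass. Define the conditional expectation given signal z by E(z) := (∫_{[0,1]} x f(z,x) dμ(x)) / (∫_{[0,1]} f(z,x) dμ(x)). Then E(1) > E(2) = ∫_{[0,1]} x dμ(x): the conditional mean of X given the lower signal value 1 strictly exceeds the conditional mean given the higher signal value 2, which equals the prior mean. (Via the constructed screening signal S with P(S ≥ z | X = x) = f(z,x), this says E[X | S ≥ 1] > E[X | S ≥ 2] = E[X].) -/
open MeasureTheory Set

/-- The conditional expectation of `X` given the signal realization `Z = z`. -/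
noncomputable def condExpSig (μ : Measure ℝ) (z : ℝ) : ℝ :=
  (∫ x in Icc (0 : ℝ) 1, x * sigDen z x ∂μ) / (∫ x in Icc (0 : ℝ) 1, sigDen z x ∂μ)

/-! On the prior's support `[0,1]` the two signal densities are affine in `x`:
`f(2,x) = 1/3` and `f(1,x) = (1 + 2x)/3`. Hence `E(2)` is the prior mean `m₁`, while
`E(1) = (m₁ + 2 m₂) / (1 + 2 m₁)` with `m₂` the second moment, and `E(1) > E(2)` reduces
to `m₁² < m₂`, i.e. to the variance of a non-Dirac prior being positive. -/

open ProbabilityTheory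

lemma MeasureTheory.Measure.eq_dirac_of_variance_id_eq_zero {μ : Measure ℝ}
    [IsProbabilityMeasure μ]
    (hμ : MemLp id 2 μ) (hvar : Var[id; μ] = 0) : μ = Measure.dirac (∫ x, x ∂μ) := by
  have hconst : (id : ℝ → ℝ) =ᵐ[μ] fun _ ↦ ∫ x, x ∂μ :=
    ae_eq_integral_of_variance_eq_zero hμ hvar
  calc μ = μ.map id := Measure.map_id.symm
    _ = μ.map (fun _ ↦ ∫ x, x ∂μ) := Measure.map_congr hconst
    _ = Measure.dirac (∫ x, x ∂μ) := by simp [Measure.map_const]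

lemma sq_integral_id_lt_integral_sq {μ : Measure ℝ} [IsProbabilityMeasure μ]
    (hμ : MemLp id 2 μ) (hnd : ∀ a : ℝ, μ ≠ Measure.dirac a) :
    (∫ x, x ∂μ) ^ 2 < ∫ x, x ^ 2 ∂μ := by
  have hpos : 0 < Var[id; μ] :=
    (variance_nonneg _ _).lt_of_ne'
      fun h ↦ hnd _ (Measure.eq_dirac_of_variance_id_eq_zero hμ h)
  rw [variance_eq_sub hμ] at hpos
  simpa using hpos

lemma sigDen_two_of_mem_Icc {x : ℝ} (hx : x ∈ Icc (0 : ℝ) 1) : sigDen 2 x = 1 / 3 := by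
  obtain ⟨hx0, hx1⟩ := hx
  rw [sigDen, if_neg (by intro h; linarith [h.2]), if_pos ⟨by linarith, by linarith⟩]

lemma sigDen_one_of_mem_Icc {x : ℝ} (hx : x ∈ Icc (0 : ℝ) 1) :
    sigDen 1 x = 1 / 3 + 2 / 3 * x := by
  obtain ⟨hx0, hx1⟩ := hx
  rcases hx0.lt_or_eq with hpos | rfl
  · rw [sigDen, if_pos ⟨by linarith, by linarith⟩]
    ring
  · rw [sigDen, if_neg (by norm_num), if_pos (by norm_num)]
    ring

lemma condExpSig_of_eqOn_affine {μ : Measure ℝ} [IsFiniteMeasure μ] {z a b : ℝ}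
    (h : EqOn (sigDen z) (fun x ↦ a + b * x) (Icc 0 1)) :
    condExpSig μ z =
      (a * ∫ x in Icc (0 : ℝ) 1, x ∂μ + b * ∫ x in Icc (0 : ℝ) 1, x ^ 2 ∂μ) /
        (a * μ.real (Icc 0 1) + b * ∫ x in Icc (0 : ℝ) 1, x ∂μ) := by
  have hx : IntegrableOn (fun x : ℝ ↦ x) (Icc 0 1) μ := continuous_id.integrableOn_Icc
  have hx2 : IntegrableOn (fun x : ℝ ↦ x ^ 2) (Icc 0 1) μ :=
    (continuous_pow 2).integrableOn_Icc
  have hnum : ∫ x in Icc (0 : ℝ) 1, x * sigDen z x ∂μ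
      = ∫ x in Icc (0 : ℝ) 1, (a * x + b * x ^ 2) ∂μ :=
    setIntegral_congr_fun measurableSet_Icc fun x hmem ↦ by rw [h hmem]; ring
  have hden :
      ∫ x in Icc (0 : ℝ) 1, sigDen z x ∂μ = ∫ x in Icc (0 : ℝ) 1, (a + b * x) ∂μ :=
    setIntegral_congr_fun measurableSet_Icc h
  rw [condExpSig, hnum, hden, integral_add (hx.const_mul a) (hx2.const_mul b),
    integral_add (integrable_const a) (hx.const_mul b), integral_const_mul, integral_const_mul,
    integral_const_mul, setIntegral_const, smul_eq_mul, mul_comm (μ.real _)]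

/-- If the prior `μ` on `[0,1]` is not a Dirac point mass, then
the conditional mean given the lower signal `1` strictly exceeds the
conditional mean given the higher signal `2`, which equals the prior mean:
`E(1) > E(2) = ∫ x dμ`. -/
theorem stmt_4 (μ : Measure ℝ) [IsProbabilityMeasure μ]
    (hμ : μ (Icc (0 : ℝ) 1) = 1)
    (hnd : ∀ a : ℝ, μ ≠ Measure.dirac a) :
    condExpSig μ 2 = (∫ x in Icc (0 : ℝ) 1, x ∂μ) ∧
    condExpSig μ 1 > condExpSig μ 2 := by
  have hrestrict : μ.restrict (Icc 0 1) = μ :=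
    Measure.restrict_eq_self_of_ae_mem <| mem_ae_iff.2 <|
      (prob_compl_eq_zero_iff measurableSet_Icc).2 hμ
  have hreal : μ.real (Icc 0 1) = 1 := by simp [measureReal_def, hμ]
  have hmem : ∀ᵐ x ∂μ, x ∈ Icc (0 : ℝ) 1 := by
    rw [← hrestrict]
    exact ae_restrict_mem measurableSet_Icc
  have hL2 : MemLp id 2 μ :=
    MemLp.of_bound aestronglyMeasurable_id 1 <| hmem.mono fun x hx ↦ by
      simpa [abs_le] using ⟨by linarith [hx.1], hx.2⟩
  have hmoments := sq_integral_id_lt_integral_sq hL2 hnd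
  have hmean_nonneg : 0 ≤ ∫ x in Icc (0 : ℝ) 1, x ∂μ :=
    setIntegral_nonneg measurableSet_Icc fun x hx ↦ hx.1
  rw [← hrestrict] at hmoments
  rw [condExpSig_of_eqOn_affine (a := 1 / 3) (b := 0)
      fun x hx ↦ by simp [sigDen_two_of_mem_Icc hx],
    condExpSig_of_eqOn_affine fun x hx ↦ sigDen_one_of_mem_Icc hx, hreal]
  refine ⟨by field_simp; ring, ?_⟩
  rw [gt_iff_lt, div_lt_div_iff₀ (by norm_num) (by linarith)]
  nlinarith
end

section
/- Fix z ∈ ℝ and assume: (a) ∫ f(z,x) dμ(x) < ∞; (b) there exist δ > 0 and a μ-integrable function G with |∂₁f(ζ, x)| ≤ G(x) for all ζ ∈ (z−δ, z+δ) and μ-almost every x; (c) the map x ↦ ∂₁f(z,x)/f(z,x) is antitone (nonincreasing) on (−∞, x̄]. Then for every w ≤ x̄ the map ζ ↦ F(w, ζ) is differentiable at z with ∂F(w, z)/∂z ≥ 0. Moreover the derivative is strictly positive if the map in (c) is strictly antitone and 0 < μ((−∞, w]) < 1. (Interpretation: the posterior cdf increases in the signal, so for nearby signals z1 < z2 the posterior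 given the lower signal first-order stochastically dominates the posterior given the higher signal.) -/
/-!
Write `N(ζ) = ∫_{(−∞,w]} f(ζ,·) dμ` and `D(ζ) = ∫_{(−∞,x̄]} f(ζ,·) dμ`. The integrable bound on
`∂₁f` makes `f(·,x)` Lipschitz near `z` for a.e. `x` (Fubini plus the fundamental theorem of
calculus), so both integrals may be differentiated under the integral sign and the derivative of
`N / D` at `z` is `(N' D − N D') / D²`. Splitting `(−∞,x̄] = A ∪ C` with `A = (−∞,w]` and
`C = (w,x̄]`, the numerator equals `M_A N_C − N_A M_C`, where `N_S`, `M_S` are the integrals of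
`f(z,·)` and `∂₁f(z,·)` over `S`. With `c = ∂₁f(z,w) / f(z,w)`, monotonicity of the likelihood
ratio gives `∂₁f ≥ c f` on `A` and `∂₁f ≤ c f` on `C`, hence `M_A N_C ≥ c N_A N_C ≥ N_A M_C`;
the last inequality is strict when the ratio is strictly antitone and `A`, `C` both carry mass.
-/

open MeasureTheory Set Filter Topology

section DerivUnderIntegral

variable {α : Type*} [MeasurableSpace α] {F F' : ℝ → α → ℝ}

theorem measurable_uncurry_of_hasDerivAt (hF : ∀ ζ, Measurable (F ζ))
    (hF' : ∀ x ζ, HasDerivAt (F · x) (F' ζ x) ζ) : Measurable (Function.uncurry F') := by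
  have hFm : Measurable (Function.uncurry F) :=
    measurable_uncurry_of_continuous_of_measurable
      (fun x => continuous_iff_continuousAt.2 fun ζ => (hF' x ζ).continuousAt) hF
  have hlim : ∀ ζ x, Tendsto (fun n : ℕ => (n : ℝ) * (F (ζ + (n : ℝ)⁻¹) x - F ζ x)) atTop
      (𝓝 (F' ζ x)) := fun ζ x => by
    simpa [Function.comp_def] using (hF' x ζ).tendsto_slope_zero_right.comp
      (tendsto_inv_atTop_nhdsGT_zero.comp tendsto_natCast_atTop_atTop)
  refine measurable_of_tendsto_metrizable (fun n => ?_) (tendsto_pi_nhds.2 fun p => hlim p.1 p.2)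
  exact ((hFm.comp ((measurable_fst.add_const _).prodMk measurable_snd)).sub hFm).const_mul _

theorem lipschitzOnWith_of_hasDerivAt_of_ae_abs_le {g g' : ℝ → ℝ} {s : Set ℝ} [s.OrdConnected]
    {C : ℝ} (hg : ∀ t ∈ s, HasDerivAt g (g' t) t)
    (hbound : ∀ᵐ t ∂volume.restrict s, |g' t| ≤ C) :
    LipschitzOnWith (Real.toNNReal C) g s := by
  rw [lipschitzOnWith_iff_dist_le_mul]
  intro a ha b hb
  have hsub : uIcc a b ⊆ s := Set.OrdConnected.uIcc_subset ‹_› ha hb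
  -- `deriv g` is measurable, unlike `g'`, and agrees with it on `s`
  have hderiv : ∀ t ∈ uIcc a b, HasDerivAt g (deriv g t) t := fun t ht =>
    (hg t (hsub ht)).differentiableAt.hasDerivAt
  have hae : ∀ᵐ t, t ∈ uIoc a b → ‖deriv g t‖ ≤ C := by
    filter_upwards [(ae_restrict_iff' (Set.OrdConnected.measurableSet ‹_›)).1 hbound] with t ht htab
    have hts := hsub (uIoc_subset_uIcc htab)
    simpa [(hg t hts).deriv] using ht hts
  have hint : IntervalIntegrable (deriv g) volume a b :=
    (intervalIntegrable_const (c := C)).mono_fun' (measurable_deriv g).aestronglyMeasurable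
      ((ae_restrict_iff' measurableSet_uIoc).2 hae)
  have hle := intervalIntegral.norm_integral_le_of_norm_le_const_ae hae
  rw [intervalIntegral.integral_eq_sub_of_hasDerivAt hderiv hint] at hle
  calc dist (g a) (g b) = ‖g b - g a‖ := by rw [dist_comm, dist_eq_norm]
    _ ≤ C * |b - a| := hle
    _ ≤ Real.toNNReal C * dist a b := by
      rw [Real.dist_eq, abs_sub_comm]
      exact mul_le_mul_of_nonneg_right (Real.le_coe_toNNReal C) (abs_nonneg _)

variable {μ : Measure α} [SFinite μ]

theorem ae_lipschitzOnWith_of_ae_abs_le (hF : ∀ ζ, Measurable (F ζ))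
    (hF' : ∀ x ζ, HasDerivAt (F · x) (F' ζ x) ζ) {s : Set ℝ} [s.OrdConnected] {G : α → ℝ}
    (hG : AEMeasurable G μ) (hbound : ∀ ζ ∈ s, ∀ᵐ x ∂μ, |F' ζ x| ≤ G x) :
    ∀ᵐ x ∂μ, LipschitzOnWith (Real.nnabs (G x)) (F · x) s := by
  obtain ⟨G', hG'm, hGG'⟩ := hG
  have hmeas : MeasurableSet {p : α × ℝ | |F' p.2 p.1| ≤ G' p.1} :=
    measurableSet_le ((measurable_uncurry_of_hasDerivAt hF hF').comp measurable_swap).abs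
      (hG'm.comp measurable_fst)
  -- Fubini turns "for each `ζ`, a.e. in `x`" into "a.e. in `x`, for a.e. `ζ`"
  have hswap : ∀ᵐ x ∂μ, ∀ᵐ ζ ∂volume.restrict s, |F' ζ x| ≤ G' x := by
    refine (Measure.ae_ae_comm hmeas).2 ?_
    filter_upwards [ae_restrict_mem (Set.OrdConnected.measurableSet ‹_›)] with ζ hζ
    filter_upwards [hbound ζ hζ, hGG'] with x hx hGx
    rwa [← hGx]
  filter_upwards [hswap, hGG'] with x hx hGx
  rw [hGx, ← Real.toNNReal_abs]
  exact (lipschitzOnWith_of_hasDerivAt_of_ae_abs_le (fun t _ => hF' x t) hx).weaken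
    (Real.toNNReal_le_toNNReal (le_abs_self _))

theorem hasDerivAt_integral_of_ae_abs_le (hF : ∀ ζ, Measurable (F ζ))
    (hF' : ∀ x ζ, HasDerivAt (F · x) (F' ζ x) ζ) {z δ : ℝ} (hδ : 0 < δ)
    (hint : Integrable (F z) μ) {G : α → ℝ} (hG : Integrable G μ)
    (hbound : ∀ ζ ∈ Ioo (z - δ) (z + δ), ∀ᵐ x ∂μ, |F' ζ x| ≤ G x) :
    Integrable (F' z) μ ∧ HasDerivAt (fun ζ => ∫ x, F ζ x ∂μ) (∫ x, F' z x ∂μ) z :=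
  hasDerivAt_integral_of_dominated_loc_of_lip (Ioo_mem_nhds (by linarith) (by linarith))
    (Eventually.of_forall fun ζ => (hF ζ).aestronglyMeasurable) hint
    (measurable_uncurry_of_hasDerivAt hF hF').of_uncurry_left.aestronglyMeasurable
    (ae_lipschitzOnWith_of_ae_abs_le hF hF' hG.aemeasurable hbound) hG
    (Eventually.of_forall fun x => hF' x z)

end DerivUnderIntegral

theorem setIntegral_pos_of_forall_pos {α : Type*} [MeasurableSpace α] {μ : Measure α}
    {s : Set α} {f : α → ℝ} (hs : MeasurableSet s) (hμs : 0 < μ s) (hf : IntegrableOn f s μ)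
    (hpos : ∀ x ∈ s, 0 < f x) : 0 < ∫ x in s, f x ∂μ := by
  rw [setIntegral_pos_iff_support_of_nonneg_ae
      ((ae_restrict_mem hs).mono fun x hx => (hpos x hx).le) hf,
    inter_eq_self_of_subset_right fun x hx => Function.mem_support.2 (hpos x hx).ne']
  exact hμs

section MonotoneLikelihoodRatio

variable {μ : Measure ℝ} {h h₁ : ℝ → ℝ} {w b : ℝ}

theorem integral_Iic_mul_sub_mul_eq (hw : w ≤ b) (hh : IntegrableOn h (Iic b) μ)
    (hh₁ : IntegrableOn h₁ (Iic b) μ) :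
    (∫ x in Iic w, h₁ x ∂μ) * (∫ x in Iic b, h x ∂μ)
        - (∫ x in Iic w, h x ∂μ) * (∫ x in Iic b, h₁ x ∂μ) =
      (∫ x in Iic w, h₁ x ∂μ) * (∫ x in Ioc w b, h x ∂μ)
        - (∫ x in Iic w, h x ∂μ) * (∫ x in Ioc w b, h₁ x ∂μ) := by
  have hsplit : ∀ g : ℝ → ℝ, IntegrableOn g (Iic b) μ →
      ∫ x in Iic b, g x ∂μ = (∫ x in Iic w, g x ∂μ) + ∫ x in Ioc w b, g x ∂μ := fun g hg => by
    rw [← setIntegral_union (Iic_disjoint_Ioc le_rfl) measurableSet_Ioc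
      (hg.mono_set (Iic_subset_Iic.2 hw)) (hg.mono_set Ioc_subset_Iic_self),
      Iic_union_Ioc_eq_Iic hw]
  rw [hsplit h hh, hsplit h₁ hh₁]
  ring

theorem mul_setIntegral_Iic_le (hpos : ∀ x, 0 < h x)
    (hanti : AntitoneOn (fun x => h₁ x / h x) (Iic b)) (hw : w ≤ b)
    (hh : IntegrableOn h (Iic w) μ) (hh₁ : IntegrableOn h₁ (Iic w) μ) :
    h₁ w / h w * ∫ x in Iic w, h x ∂μ ≤ ∫ x in Iic w, h₁ x ∂μ := by
  rw [← integral_const_mul]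
  refine setIntegral_mono_on (hh.const_mul _) hh₁ measurableSet_Iic fun x hx => ?_
  exact (le_div_iff₀ (hpos x)).1 (hanti (mem_Iic.2 (hx.trans hw)) hw hx)

theorem setIntegral_Ioc_le_mul (hpos : ∀ x, 0 < h x)
    (hanti : AntitoneOn (fun x => h₁ x / h x) (Iic b))
    (hh : IntegrableOn h (Ioc w b) μ) (hh₁ : IntegrableOn h₁ (Ioc w b) μ) :
    ∫ x in Ioc w b, h₁ x ∂μ ≤ h₁ w / h w * ∫ x in Ioc w b, h x ∂μ := by
  rw [← integral_const_mul]
  refine setIntegral_mono_on hh₁ (hh.const_mul _) measurableSet_Ioc fun x hx => ?_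
  exact (div_le_iff₀ (hpos x)).1 (hanti (mem_Iic.2 (hx.1.le.trans hx.2)) hx.2 hx.1.le)

theorem setIntegral_Ioc_lt_mul (hpos : ∀ x, 0 < h x)
    (hanti : StrictAntiOn (fun x => h₁ x / h x) (Iic b))
    (hμ : 0 < μ (Ioc w b)) (hh : IntegrableOn h (Ioc w b) μ)
    (hh₁ : IntegrableOn h₁ (Ioc w b) μ) :
    ∫ x in Ioc w b, h₁ x ∂μ < h₁ w / h w * ∫ x in Ioc w b, h x ∂μ := by
  rw [← integral_const_mul, ← sub_pos, ← integral_sub (hh.const_mul _) hh₁]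
  refine setIntegral_pos_of_forall_pos measurableSet_Ioc hμ ((hh.const_mul _).sub hh₁)
    fun x hx => sub_pos.2 ?_
  exact (div_lt_iff₀ (hpos x)).1 (hanti (mem_Iic.2 (hx.1.le.trans hx.2)) hx.2 hx.1)

theorem integral_Iic_mul_sub_mul_nonneg (hpos : ∀ x, 0 < h x)
    (hanti : AntitoneOn (fun x => h₁ x / h x) (Iic b))
    (hw : w ≤ b) (hh : IntegrableOn h (Iic b) μ) (hh₁ : IntegrableOn h₁ (Iic b) μ) :
    0 ≤ (∫ x in Iic w, h₁ x ∂μ) * (∫ x in Iic b, h x ∂μ)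
        - (∫ x in Iic w, h x ∂μ) * (∫ x in Iic b, h₁ x ∂μ) := by
  have hA := mul_setIntegral_Iic_le hpos hanti hw (hh.mono_set (Iic_subset_Iic.2 hw))
    (hh₁.mono_set (Iic_subset_Iic.2 hw))
  have hC := setIntegral_Ioc_le_mul (w := w) hpos hanti (hh.mono_set Ioc_subset_Iic_self)
    (hh₁.mono_set Ioc_subset_Iic_self)
  have hNA : 0 ≤ ∫ x in Iic w, h x ∂μ :=
    setIntegral_nonneg measurableSet_Iic fun x _ => (hpos x).le
  have hNC : 0 ≤ ∫ x in Ioc w b, h x ∂μ :=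
    setIntegral_nonneg measurableSet_Ioc fun x _ => (hpos x).le
  rw [integral_Iic_mul_sub_mul_eq hw hh hh₁]
  nlinarith [mul_le_mul_of_nonneg_right hA hNC, mul_le_mul_of_nonneg_left hC hNA]

theorem integral_Iic_mul_sub_mul_pos (hpos : ∀ x, 0 < h x)
    (hanti : StrictAntiOn (fun x => h₁ x / h x) (Iic b))
    (hw : w ≤ b) (hμw : 0 < μ (Iic w)) (hμwb : μ (Iic w) < μ (Iic b))
    (hh : IntegrableOn h (Iic b) μ) (hh₁ : IntegrableOn h₁ (Iic b) μ) :
    0 < (∫ x in Iic w, h₁ x ∂μ) * (∫ x in Iic b, h x ∂μ)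
        - (∫ x in Iic w, h x ∂μ) * (∫ x in Iic b, h₁ x ∂μ) := by
  have hμC : 0 < μ (Ioc w b) := by
    refine pos_iff_ne_zero.2 fun h0 => hμwb.not_ge ?_
    calc μ (Iic b) = μ (Iic w ∪ Ioc w b) := by rw [Iic_union_Ioc_eq_Iic hw]
      _ ≤ μ (Iic w) + μ (Ioc w b) := measure_union_le _ _
      _ = μ (Iic w) := by rw [h0, add_zero]
  have hA := mul_setIntegral_Iic_le hpos hanti.antitoneOn hw (hh.mono_set (Iic_subset_Iic.2 hw))
    (hh₁.mono_set (Iic_subset_Iic.2 hw))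
  have hC := setIntegral_Ioc_lt_mul hpos hanti hμC (hh.mono_set Ioc_subset_Iic_self)
    (hh₁.mono_set Ioc_subset_Iic_self)
  have hNA : 0 < ∫ x in Iic w, h x ∂μ :=
    setIntegral_pos_of_forall_pos measurableSet_Iic hμw (hh.mono_set (Iic_subset_Iic.2 hw))
      fun x _ => hpos x
  have hNC : 0 ≤ ∫ x in Ioc w b, h x ∂μ :=
    setIntegral_nonneg measurableSet_Ioc fun x _ => (hpos x).le
  rw [integral_Iic_mul_sub_mul_eq hw hh hh₁]
  nlinarith [mul_le_mul_of_nonneg_right hA hNC, mul_lt_mul_of_pos_left hC hNA]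

end MonotoneLikelihoodRatio

theorem stmt_13_general (xbar : ℝ) (μ : Measure ℝ) [IsProbabilityMeasure μ]
    (hμ : μ (Iic xbar) = 1)
    (f f₁ : ℝ → ℝ → ℝ)
    (hfpos : ∀ z x, 0 < f z x)
    (hfmeas : ∀ z, Measurable fun x => f z x)
    (hfderiv : ∀ x z, HasDerivAt (fun ζ => f ζ x) (f₁ z x) z)
    (z : ℝ)
    (ha : Integrable (fun x => f z x) μ)
    (hb : ∃ δ > (0 : ℝ), ∃ G : ℝ → ℝ, Integrable G μ ∧
      ∀ ζ ∈ Ioo (z - δ) (z + δ), ∀ᵐ x ∂μ, |f₁ ζ x| ≤ G x)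
    (hc : AntitoneOn (fun x => f₁ z x / f z x) (Iic xbar)) :
    ∀ w ≤ xbar, ∃ d : ℝ,
      HasDerivAt
        (fun ζ => (∫ x in Iic w, f ζ x ∂μ) / (∫ x in Iic xbar, f ζ x ∂μ)) d z ∧
      0 ≤ d ∧
      (StrictAntiOn (fun x => f₁ z x / f z x) (Iic xbar) →
        0 < μ (Iic w) → μ (Iic w) < 1 → 0 < d) := by
  obtain ⟨δ, hδ, G, hG, hbound⟩ := hb
  have hderiv (s : Set ℝ) : IntegrableOn (f₁ z) s μ ∧
      HasDerivAt (fun ζ => ∫ x in s, f ζ x ∂μ) (∫ x in s, f₁ z x ∂μ) z :=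
    hasDerivAt_integral_of_ae_abs_le hfmeas hfderiv hδ ha.restrict hG.restrict
      fun ζ hζ => ae_restrict_of_ae (hbound ζ hζ)
  have hden : 0 < ∫ x in Iic xbar, f z x ∂μ :=
    setIntegral_pos_of_forall_pos measurableSet_Iic (by simp [hμ]) ha.integrableOn
      fun x _ => hfpos z x
  intro w hw
  obtain ⟨hint₁, hD⟩ := hderiv (Iic xbar)
  refine ⟨_, (hderiv (Iic w)).2.div hD hden.ne',
    div_nonneg (integral_Iic_mul_sub_mul_nonneg (hfpos z) hc hw ha.integrableOn hint₁)
      (sq_nonneg _),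
    fun hanti hμw hμw₁ => div_pos ?_ (pow_pos hden 2)⟩
  exact integral_Iic_mul_sub_mul_pos (hfpos z) hanti hw hμw (hμ ▸ hμw₁) ha.integrableOn hint₁

/-- Let `X ≤ x̄` with prior `μ` (`μ((−∞,x̄]) = 1`) and let
`f(z,x) > 0` be conditional signal densities, differentiable in the signal
argument with derivative `f₁`. Fix a signal `z` with positive, finite
denominator, and assume: (a) `x ↦ f(z,x)` is `μ`-integrable; (b) a dominated
bound for `f₁` near `z`; (c) `x ↦ f₁(z,x)/f(z,x)` is antitone on `(−∞, x̄]`.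
Then for every `w ≤ x̄` the posterior cdf
`ζ ↦ (∫_{(−∞,w]} f(ζ,x) dμ)/(∫_{(−∞,x̄]} f(ζ,x) dμ)` is differentiable at `z`
with nonnegative derivative, and the derivative is strictly positive if the
log-derivative is strictly antitone and `0 < μ((−∞,w]) < 1`. -/
theorem stmt_13 (xbar : ℝ) (μ : Measure ℝ) [IsProbabilityMeasure μ]
    (hμ : μ (Iic xbar) = 1)
    (f f₁ : ℝ → ℝ → ℝ)
    (hfpos : ∀ z x, 0 < f z x)
    (hfmeas : ∀ z, Measurable fun x => f z x)
    (hfderiv : ∀ x z, HasDerivAt (fun ζ => f ζ x) (f₁ z x) z)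
    (z : ℝ)
    (ha : Integrable (fun x => f z x) μ)
    (hden : 0 < ∫ x in Iic xbar, f z x ∂μ)
    (hb : ∃ δ > (0 : ℝ), ∃ G : ℝ → ℝ, Integrable G μ ∧
      ∀ ζ ∈ Ioo (z - δ) (z + δ), ∀ᵐ x ∂μ, |f₁ ζ x| ≤ G x)
    (hc : AntitoneOn (fun x => f₁ z x / f z x) (Iic xbar)) :
    ∀ w ≤ xbar, ∃ d : ℝ,
      HasDerivAt
        (fun ζ => (∫ x in Iic w, f ζ x ∂μ) / (∫ x in Iic xbar, f ζ x ∂μ)) d z ∧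
      0 ≤ d ∧
      (StrictAntiOn (fun x => f₁ z x / f z x) (Iic xbar) →
        0 < μ (Iic w) → μ (Iic w) < 1 → 0 < d) :=
  stmt_13_general xbar μ hμ f f₁ hfpos hfmeas hfderiv z ha hb hc
end

section
/- Let ν be a finite Borel measure on ℝ and let g : ℝ → ℝ be ν-integrable and antitone (nonincreasing). Then for every w ∈ ℝ: (∫_{(−∞,w]} g dν) · ν(ℝ) ≥ (∫_ℝ g dν) · ν((−∞,w]). If moreover g is strictly antitone and 0 < ν((−∞,w]) < ν(ℝ), then the inequality is strict. -/
/-! Split `ℝ` at `w`. By monotonicity `∫_{(−∞,w]} g dν ≥ g(w) ν((−∞,w])` and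
`∫_{(w,∞)} g dν ≤ g(w) ν((w,∞))`; cross-multiplying these two bounds by the measures of
the opposite halves and adding gives the inequality, which is strict as soon as the second
bound is strict and `ν((−∞,w]) > 0`. -/

open MeasureTheory Set

lemma add_mul_le_mul_add_of_const_mul_le {a b c I J : ℝ} (ha : 0 ≤ a) (hb : 0 ≤ b)
    (hI : c * a ≤ I) (hJ : J ≤ c * b) : (I + J) * a ≤ I * (a + b) := by
  nlinarith [mul_le_mul_of_nonneg_right hI hb, mul_le_mul_of_nonneg_right hJ ha]

lemma add_mul_lt_mul_add_of_const_mul_le {a b c I J : ℝ} (ha : 0 < a) (hb : 0 ≤ b)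
    (hI : c * a ≤ I) (hJ : J < c * b) : (I + J) * a < I * (a + b) := by
  nlinarith [mul_le_mul_of_nonneg_right hI hb, mul_lt_mul_of_pos_right hJ ha]

section

variable {α : Type*} [MeasurableSpace α] {μ : Measure α} {f : α → ℝ} {s : Set α} {c : ℝ}

lemma setIntegral_le_const_mul_real (hs : MeasurableSet s) (hμs : μ s ≠ ⊤)
    (hf : IntegrableOn f s μ) (hfc : ∀ x ∈ s, f x ≤ c) :
    ∫ x in s, f x ∂μ ≤ c * μ.real s := by
  simpa [mul_comm] using setIntegral_mono_on hf (integrableOn_const hμs) hs hfc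

lemma setIntegral_lt_const_mul_real (hs : MeasurableSet s) (hμs : μ s ≠ ⊤) (hμs_pos : 0 < μ s)
    (hf : IntegrableOn f s μ) (hfc : ∀ x ∈ s, f x < c) :
    ∫ x in s, f x ∂μ < c * μ.real s := by
  have hgap_int : IntegrableOn (fun x ↦ c - f x) s μ := (integrableOn_const hμs).sub hf
  have hgap_pos : 0 < ∫ x in s, (c - f x) ∂μ := by
    rw [setIntegral_pos_iff_support_of_nonneg_ae
      ((ae_restrict_iff' hs).mpr (ae_of_all _ fun x hx ↦ (sub_pos.mpr (hfc x hx)).le)) hgap_int]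
    exact hμs_pos.trans_le <| measure_mono fun x hx ↦ ⟨(sub_pos.mpr (hfc x hx)).ne', hx⟩
  rw [integral_sub (integrableOn_const hμs (C := c)) hf, setIntegral_const, smul_eq_mul]
    at hgap_pos
  linarith

variable [IsFiniteMeasure μ]

theorem integral_mul_measureReal_le_setIntegral_mul (hs : MeasurableSet s) (hf : Integrable f μ)
    (h_on : ∀ x ∈ s, c ≤ f x) (h_off : ∀ x ∉ s, f x ≤ c) :
    (∫ x, f x ∂μ) * μ.real s ≤ (∫ x in s, f x ∂μ) * μ.real univ := by
  rw [← integral_add_compl hs hf, ← measureReal_add_measureReal_compl hs]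
  exact add_mul_le_mul_add_of_const_mul_le measureReal_nonneg measureReal_nonneg
    (setIntegral_ge_of_const_le_real hs (measure_ne_top _ _) h_on hf.integrableOn)
    (setIntegral_le_const_mul_real hs.compl (measure_ne_top _ _) hf.integrableOn h_off)

theorem integral_mul_measureReal_lt_setIntegral_mul (hs : MeasurableSet s) (hf : Integrable f μ)
    (hμs : 0 < μ s) (hμsc : 0 < μ sᶜ)
    (h_on : ∀ x ∈ s, c ≤ f x) (h_off : ∀ x ∉ s, f x < c) :
    (∫ x, f x ∂μ) * μ.real s < (∫ x in s, f x ∂μ) * μ.real univ := by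
  rw [← integral_add_compl hs hf, ← measureReal_add_measureReal_compl hs]
  exact add_mul_lt_mul_add_of_const_mul_le
    (ENNReal.toReal_pos hμs.ne' (measure_ne_top _ _)) measureReal_nonneg
    (setIntegral_ge_of_const_le_real hs (measure_ne_top _ _) h_on hf.integrableOn)
    (setIntegral_lt_const_mul_real hs.compl (measure_ne_top _ _) hμsc hf.integrableOn h_off)

end

/-- Correlation-type inequality. Let `ν` be a finite Borel
measure on `ℝ` and let `g` be `ν`-integrable and antitone. Then for every
`w`, `(∫_{(−∞,w]} g dν) · ν(ℝ) ≥ (∫_ℝ g dν) · ν((−∞,w])`; and if `g` is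
strictly antitone and `0 < ν((−∞,w]) < ν(ℝ)`, the inequality is strict. -/
theorem stmt_14 (ν : Measure ℝ) [IsFiniteMeasure ν]
    (g : ℝ → ℝ) (hint : Integrable g ν) (hanti : Antitone g) :
    ∀ w : ℝ,
      (∫ x, g x ∂ν) * (ν (Iic w)).toReal ≤
        (∫ x in Iic w, g x ∂ν) * (ν univ).toReal ∧
      (StrictAnti g → 0 < ν (Iic w) → ν (Iic w) < ν univ →
        (∫ x, g x ∂ν) * (ν (Iic w)).toReal <
          (∫ x in Iic w, g x ∂ν) * (ν univ).toReal) := by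
  intro w
  refine ⟨integral_mul_measureReal_le_setIntegral_mul measurableSet_Iic hint
    (fun x hx ↦ hanti hx) (fun x hx ↦ hanti (lt_of_not_ge hx).le), fun hstrict hpos hlt ↦ ?_⟩
  have hcompl_pos : 0 < ν (Iic w)ᶜ := by
    rw [measure_compl measurableSet_Iic (measure_ne_top _ _)]
    exact tsub_pos_of_lt hlt
  exact integral_mul_measureReal_lt_setIntegral_mul measurableSet_Iic hint hpos hcompl_pos
    (fun x hx ↦ hanti hx) (fun x hx ↦ hstrict (lt_of_not_ge hx))
end

section
/- Fix z ∈ ℝ and assume: (a) ∫ f(z,x) dμ(x) < ∞; (b) there exist δ > 0 and a μ-integrable function G with |∂₁f(ζ, x)| ≤ G(x) for all ζ ∈ (z−δ, z+δ) and μ-almost every x; (c) the map x ↦ ∂₁f(z,x)/f(z,x) is antitone (nonincreasing) on [x̲, ∞). Then for every w ≥ x̲ the map ζ ↦ F(w, ζ) is differentiable at z with ∂F(w, z)/∂z ≥ 0, and the derivative is strictly positive if the map in (c) is strictly antitone and 0 < μ((−∞, w]) < 1. -/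
/-!
Differentiating under the integral sign, justified by the dominated bound (after a Fubini swap of
the quantifiers it makes `f(·, x)` Lipschitz near `z` for a.e. `x`), the derivative of `N / D` is
`(N' D - N D') / D²`, where `N` and `D` integrate `f(z, ·)` over `(−∞, w]` and over everything, and
the primes denote the same integrals of `∂₁f(z, ·)`. Splitting `D = N + M` along `(−∞, w]` turns
the numerator into `N' M - N M'`. With `c = ∂₁f(z, w) / f(z, w)`, the antitone likelihood ratio
gives `c N ≤ N'` and `M' ≤ c M`, so `N' M - N M' ≥ c N M - c N M = 0`, strictly when the ratio is
strictly antitone and both `(−∞, w]` and its complement carry mass.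
-/

open MeasureTheory Set Filter Topology

theorem lipschitzOnWith_Ioo_of_ae_abs_deriv_le {g g' : ℝ → ℝ} {a b C : ℝ}
    (hg : ∀ ζ, HasDerivAt g (g' ζ) ζ) (hbound : ∀ᵐ ζ ∂volume.restrict (Ioo a b), |g' ζ| ≤ C) :
    LipschitzOnWith (Real.nnabs C) g (Ioo a b) := by
  have hg'meas : Measurable g' := by
    simpa only [funext fun ζ => (hg ζ).deriv] using measurable_deriv g
  rw [lipschitzOnWith_iff_dist_le_mul]
  intro x hx y hy
  have hsub : uIoc y x ⊆ Ioo a b := uIoc_subset_uIcc.trans (ordConnected_Ioo.uIcc_subset hy hx)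
  have hbound' : ∀ᵐ t ∂volume.restrict (uIoc y x), ‖g' t‖ ≤ |C| := by
    filter_upwards [ae_restrict_of_ae_restrict_of_subset hsub hbound] with t ht
    exact ht.trans (le_abs_self C)
  have hint : IntervalIntegrable g' volume y x := by
    rw [intervalIntegrable_iff]
    exact (integrableOn_const measure_Ioc_lt_top.ne).mono' hg'meas.aestronglyMeasurable.restrict
      hbound'
  rw [Real.dist_eq, Real.dist_eq, Real.coe_nnabs,
    ← intervalIntegral.integral_eq_sub_of_hasDerivAt (fun t _ => hg t) hint]
  calc ‖∫ t in y..x, g' t‖ ≤ |∫ _ in y..x, (|C| : ℝ)| :=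
        intervalIntegral.norm_integral_le_abs_of_norm_le hbound' intervalIntegrable_const
    _ = |C| * |x - y| := by
        rw [intervalIntegral.integral_const, smul_eq_mul, abs_mul, abs_abs, mul_comm]

-- `f₁` is the pointwise limit of the jointly measurable difference quotients of `f`.
theorem measurable_uncurry_of_hasDerivAt_s15 {α : Type*} [MeasurableSpace α] {f f₁ : ℝ → α → ℝ}
    (hfmeas : ∀ ζ, Measurable (f ζ)) (hfderiv : ∀ x ζ, HasDerivAt (fun ζ => f ζ x) (f₁ ζ x) ζ) :
    Measurable (Function.uncurry f₁) := by
  have hf : Measurable (Function.uncurry f) :=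
    measurable_uncurry_of_continuous_of_measurable
      (fun x => continuous_iff_continuousAt.2 fun ζ => (hfderiv x ζ).continuousAt) hfmeas
  have hstep : Tendsto (fun n : ℕ => (n : ℝ)⁻¹) atTop (𝓝[>] 0) :=
    tendsto_inv_atTop_nhdsGT_zero.comp tendsto_natCast_atTop_atTop
  refine measurable_of_tendsto_metrizable
    (f := fun (n : ℕ) (p : ℝ × α) => ((n : ℝ)⁻¹)⁻¹ * (f (p.1 + (n : ℝ)⁻¹) p.2 - f p.1 p.2))
    (fun n => measurable_const.mul ((hf.comp ((measurable_fst.add_const _).prodMk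
      measurable_snd)).sub hf)) (tendsto_pi_nhds.2 fun p => ?_)
  exact ((hfderiv p.2 p.1).tendsto_slope_zero_right).comp hstep

theorem ae_lipschitzOnWith_Ioo_of_forall_ae_abs_deriv_le {α : Type*} [MeasurableSpace α]
    {ν : Measure α} [SFinite ν] {f f₁ : ℝ → α → ℝ} {G : α → ℝ} {a b : ℝ}
    (hfmeas : ∀ ζ, Measurable (f ζ)) (hfderiv : ∀ x ζ, HasDerivAt (fun ζ => f ζ x) (f₁ ζ x) ζ)
    (hG : Measurable G) (hbound : ∀ ζ ∈ Ioo a b, ∀ᵐ x ∂ν, |f₁ ζ x| ≤ G x) :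
    ∀ᵐ x ∂ν, LipschitzOnWith (Real.nnabs (G x)) (fun ζ => f ζ x) (Ioo a b) := by
  have hf₁ := measurable_uncurry_of_hasDerivAt_s15 hfmeas hfderiv
  have hswap : ∀ᵐ x ∂ν, ∀ᵐ ζ ∂volume.restrict (Ioo a b), |f₁ ζ x| ≤ G x :=
    (Measure.ae_ae_comm (p := fun ζ x => |f₁ ζ x| ≤ G x)
      (measurableSet_le hf₁.abs (hG.comp measurable_snd))).1
      ((ae_restrict_iff' measurableSet_Ioo).2 (ae_of_all _ hbound))
  filter_upwards [hswap] with x hx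
  exact lipschitzOnWith_Ioo_of_ae_abs_deriv_le (hfderiv x) hx

theorem hasDerivAt_integral_of_forall_ae_abs_deriv_le {α : Type*} [MeasurableSpace α]
    {ν : Measure α} [SFinite ν] {f f₁ : ℝ → α → ℝ} {G : α → ℝ} {a b z : ℝ} (hz : z ∈ Ioo a b)
    (hfmeas : ∀ ζ, Measurable (f ζ)) (hfderiv : ∀ x ζ, HasDerivAt (fun ζ => f ζ x) (f₁ ζ x) ζ)
    (hint : Integrable (f z) ν) (hG : Integrable G ν)
    (hbound : ∀ ζ ∈ Ioo a b, ∀ᵐ x ∂ν, |f₁ ζ x| ≤ G x) :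
    Integrable (f₁ z) ν ∧ HasDerivAt (fun ζ => ∫ x, f ζ x ∂ν) (∫ x, f₁ z x ∂ν) z := by
  have hGmeas := hG.aestronglyMeasurable.aemeasurable
  have hbound' : ∀ ζ ∈ Ioo a b, ∀ᵐ x ∂ν, |f₁ ζ x| ≤ hGmeas.mk G x := fun ζ hζ => by
    filter_upwards [hbound ζ hζ, hGmeas.ae_eq_mk] with x hx hGx
    exact hGx ▸ hx
  exact hasDerivAt_integral_of_dominated_loc_of_lip (Ioo_mem_nhds hz.1 hz.2)
    (Eventually.of_forall fun ζ => (hfmeas ζ).aestronglyMeasurable) hint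
    ((measurable_uncurry_of_hasDerivAt_s15 hfmeas hfderiv).comp
      (measurable_const.prodMk measurable_id)).aestronglyMeasurable
    (ae_lipschitzOnWith_Ioo_of_forall_ae_abs_deriv_le hfmeas hfderiv hGmeas.measurable_mk hbound')
    (hG.congr hGmeas.ae_eq_mk) (Eventually.of_forall fun x => hfderiv x z)

section CrossDifference

variable {α : Type*} [MeasurableSpace α] {ν : Measure α} {s : Set α} {g h : α → ℝ} {c : ℝ}

theorem setIntegral_pos_of_ae_pos (hs : MeasurableSet s) (hg : IntegrableOn g s ν)
    (hpos : ∀ᵐ x ∂ν, x ∈ s → 0 < g x) (hνs : 0 < ν s) : 0 < ∫ x in s, g x ∂ν := by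
  rw [setIntegral_pos_iff_support_of_nonneg_ae
    ((ae_restrict_iff' hs).2 (hpos.mono fun x hx hxs => (hx hxs).le)) hg]
  refine hνs.trans_le (measure_mono_ae ?_)
  filter_upwards [hpos] with x hx hxs
  exact ⟨(hx hxs).ne', hxs⟩

theorem setIntegral_mul_integral_sub_eq (hs : MeasurableSet s) (hg : Integrable g ν)
    (hh : Integrable h ν) :
    (∫ x in s, h x ∂ν) * (∫ x, g x ∂ν) - (∫ x in s, g x ∂ν) * ∫ x, h x ∂ν =
      (∫ x in s, h x ∂ν) * (∫ x in sᶜ, g x ∂ν) - (∫ x in s, g x ∂ν) * ∫ x in sᶜ, h x ∂ν := by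
  rw [← integral_add_compl hs hg, ← integral_add_compl hs hh]
  ring

theorem const_mul_setIntegral_le (hs : MeasurableSet s) (hg : IntegrableOn g s ν)
    (hh : IntegrableOn h s ν) (hle : ∀ᵐ x ∂ν, x ∈ s → c * g x ≤ h x) :
    c * ∫ x in s, g x ∂ν ≤ ∫ x in s, h x ∂ν := by
  rw [← integral_const_mul]
  exact setIntegral_mono_on_ae (hg.const_mul c) hh hs hle

theorem setIntegral_mul_integral_sub_nonneg (hs : MeasurableSet s) (hg0 : 0 ≤ᵐ[ν] g)
    (hg : Integrable g ν) (hh : Integrable h ν) (hin : ∀ᵐ x ∂ν, x ∈ s → c * g x ≤ h x)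
    (hout : ∀ᵐ x ∂ν, x ∉ s → h x ≤ c * g x) :
    0 ≤ (∫ x in s, h x ∂ν) * (∫ x, g x ∂ν) - (∫ x in s, g x ∂ν) * ∫ x, h x ∂ν := by
  rw [setIntegral_mul_integral_sub_eq hs hg hh]
  have hin' := const_mul_setIntegral_le hs hg.integrableOn hh.integrableOn hin
  have hout' : ∫ x in sᶜ, h x ∂ν ≤ c * ∫ x in sᶜ, g x ∂ν := by
    rw [← integral_const_mul]
    exact setIntegral_mono_on_ae hh.integrableOn (hg.const_mul c).integrableOn hs.compl hout
  have hgs : 0 ≤ ∫ x in s, g x ∂ν := integral_nonneg_of_ae (ae_restrict_of_ae hg0)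
  have hgsc : 0 ≤ ∫ x in sᶜ, g x ∂ν := integral_nonneg_of_ae (ae_restrict_of_ae hg0)
  nlinarith

theorem setIntegral_mul_integral_sub_pos (hs : MeasurableSet s) (hg0 : 0 ≤ᵐ[ν] g)
    (hg : Integrable g ν) (hh : Integrable h ν) (hin : ∀ᵐ x ∂ν, x ∈ s → c * g x ≤ h x)
    (hout : ∀ᵐ x ∂ν, x ∉ s → h x < c * g x) (hgs : 0 < ∫ x in s, g x ∂ν) (hνsc : 0 < ν sᶜ) :
    0 < (∫ x in s, h x ∂ν) * (∫ x, g x ∂ν) - (∫ x in s, g x ∂ν) * ∫ x, h x ∂ν := by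
  rw [setIntegral_mul_integral_sub_eq hs hg hh]
  have hin' := const_mul_setIntegral_le hs hg.integrableOn hh.integrableOn hin
  have hout' : ∫ x in sᶜ, h x ∂ν < c * ∫ x in sᶜ, g x ∂ν := by
    have hgap : 0 < ∫ x in sᶜ, (c * g x - h x) ∂ν := setIntegral_pos_of_ae_pos hs.compl ((hg.const_mul c).sub hh).integrableOn
      (hout.mono fun x hx hxs => sub_pos.2 (hx hxs)) hνsc
    rwa [integral_sub (hg.const_mul c).integrableOn hh.integrableOn, integral_const_mul,
      sub_pos] at hgap
  have hgsc : 0 ≤ ∫ x in sᶜ, g x ∂ν := integral_nonneg_of_ae (ae_restrict_of_ae hg0)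
  nlinarith

end CrossDifference

/-- Let `X ≥ x̲` with prior `μ` (`μ([x̲,∞)) = 1`) and let
`f(z,x) > 0` be conditional signal densities, differentiable in the signal
argument with derivative `f₁`. Fix a signal `z` with positive, finite
denominator, and assume: (a) `x ↦ f(z,x)` is `μ`-integrable; (b) a dominated
bound for `f₁` near `z`; (c) `x ↦ f₁(z,x)/f(z,x)` is antitone on `[x̲, ∞)`.
Then for every `w ≥ x̲` the posterior cdf
`ζ ↦ (∫_{(−∞,w]} f(ζ,x) dμ)/(∫_{[x̲,∞)} f(ζ,x) dμ)` is differentiable at `z`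
with nonnegative derivative, and the derivative is strictly positive if the
log-derivative is strictly antitone and `0 < μ((−∞,w]) < 1`. -/
theorem stmt_15 (xlow : ℝ) (μ : Measure ℝ) [IsProbabilityMeasure μ]
    (hμ : μ (Ici xlow) = 1)
    (f f₁ : ℝ → ℝ → ℝ)
    (hfpos : ∀ z x, 0 < f z x)
    (hfmeas : ∀ z, Measurable fun x => f z x)
    (hfderiv : ∀ x z, HasDerivAt (fun ζ => f ζ x) (f₁ z x) z)
    (z : ℝ)
    (ha : Integrable (fun x => f z x) μ)
    (hden : 0 < ∫ x in Ici xlow, f z x ∂μ)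
    (hb : ∃ δ > (0 : ℝ), ∃ G : ℝ → ℝ, Integrable G μ ∧
      ∀ ζ ∈ Ioo (z - δ) (z + δ), ∀ᵐ x ∂μ, |f₁ ζ x| ≤ G x)
    (hc : AntitoneOn (fun x => f₁ z x / f z x) (Ici xlow)) :
    ∀ w, xlow ≤ w → ∃ d : ℝ,
      HasDerivAt
        (fun ζ => (∫ x in Iic w, f ζ x ∂μ) / (∫ x in Ici xlow, f ζ x ∂μ)) d z ∧
      0 ≤ d ∧
      (StrictAntiOn (fun x => f₁ z x / f z x) (Ici xlow) →
        0 < μ (Iic w) → μ (Iic w) < 1 → 0 < d) := by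
  intro w hw
  obtain ⟨δ, hδ, G, hG, hbound⟩ := hb
  have hz : z ∈ Ioo (z - δ) (z + δ) := ⟨sub_lt_self z hδ, lt_add_of_pos_right z hδ⟩
  have hS : ∀ᵐ x ∂μ, x ∈ Ici xlow := (mem_ae_iff_prob_eq_one measurableSet_Ici).2 hμ
  rw [Measure.restrict_eq_self_of_ae_mem hS] at hden ⊢
  obtain ⟨hf₁, hderD⟩ := hasDerivAt_integral_of_forall_ae_abs_deriv_le hz hfmeas hfderiv ha hG hbound
  obtain ⟨-, hderN⟩ := hasDerivAt_integral_of_forall_ae_abs_deriv_le (ν := μ.restrict (Iic w)) hz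
    hfmeas hfderiv ha.restrict hG.restrict fun ζ hζ => ae_restrict_of_ae (hbound ζ hζ)
  have hf0 : 0 ≤ᵐ[μ] f z := ae_of_all _ fun x => (hfpos z x).le
  have hin : ∀ᵐ x ∂μ, x ∈ Iic w → f₁ z w / f z w * f z x ≤ f₁ z x := by
    filter_upwards [hS] with x hx hxw using (le_div_iff₀ (hfpos z x)).1 (hc hx hw hxw)
  refine ⟨_, hderN.div hderD hden.ne', div_nonneg ?_ (sq_nonneg _),
    fun hsa hμw hμw1 => div_pos ?_ (pow_pos hden 2)⟩
  · refine setIntegral_mul_integral_sub_nonneg measurableSet_Iic hf0 ha hf₁ hin ?_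
    filter_upwards [hS] with x hx hxw
    exact (div_le_iff₀ (hfpos z x)).1 (hc hw hx (not_le.1 hxw).le)
  · refine setIntegral_mul_integral_sub_pos measurableSet_Iic hf0 ha hf₁ hin ?_
      (setIntegral_pos_of_ae_pos measurableSet_Iic ha.integrableOn
        (ae_of_all _ fun x _ => hfpos z x) hμw) ?_
    · filter_upwards [hS] with x hx hxw
      exact (div_lt_iff₀ (hfpos z x)).1 (hsa hw hx (not_le.1 hxw))
    · rw [prob_compl_eq_one_sub measurableSet_Iic]
      exact tsub_pos_of_lt hμw1
end

section
/- Let λ > 0 and take the exponential density g(ε) = λ e^{−λ ε} for ε ≥ 0. Then for every z > 0 and every w < 0: F(w|z) = (∫_{−∞}^{w} e^{(1+λ)x} (1 − p(x)) dx) / (∫_{−∞}^{0} e^{(1+λ)y} (1 − p(y)) dy), which is independent of z, and F(w|0) < F(w|z). That is, with exponential under-declaration, the counterintuitive ordering F(w|0) < F(w|z) holds for ALL positive under-declaration signals z (the threshold z̄ of the continuous-g result is infinite). -/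
open MeasureTheory Set Real

/-- Tax-evasion posterior cdf given an under-declaration signal `z > 0`:
`F(w|z) = (∫_{−∞}^w e^x (1−p(x)) g(z−x) dx) / (∫_{−∞}^0 e^y (1−p(y)) g(z−y) dy)`. -/
noncomputable def taxPost (p g : ℝ → ℝ) (w z : ℝ) : ℝ :=
  (∫ x in Iic w, Real.exp x * (1 - p x) * g (z - x)) /
    (∫ y in Iic (0 : ℝ), Real.exp y * (1 - p y) * g (z - y))

/-- Tax-evasion posterior cdf given the truthful declaration `z = 0` (the
atom `p(0)` of exact truth-telling enters the denominator). -/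
noncomputable def taxPostZero (p g : ℝ → ℝ) (w : ℝ) : ℝ :=
  (∫ x in Iic w, Real.exp x * (1 - p x) * g (-x)) /
    (p 0 + ∫ y in Iic (0 : ℝ), Real.exp y * (1 - p y) * g (-y))

/-- The exponential under-declaration density `g(ε) = λ e^{−λε}` for `ε ≥ 0`. -/
noncomputable def expDen (lam ε : ℝ) : ℝ :=
  if 0 ≤ ε then lam * Real.exp (-lam * ε) else 0

/-- With exponential under-declaration density
`g(ε) = λ e^{−λε}`, for every `z > 0` and `w < 0` the posterior cdf equals
`(∫_{−∞}^w e^{(1+λ)x}(1−p(x)) dx) / (∫_{−∞}^0 e^{(1+λ)y}(1−p(y)) dy)`,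
which is independent of `z`, and the counterintuitive ordering
`F(w|0) < F(w|z)` holds for ALL `z > 0`. -/
theorem stmt_19 (lam : ℝ) (hlam : 0 < lam) (p : ℝ → ℝ)
    (hpmeas : Measurable p)
    (hp : ∀ x ≤ (0 : ℝ), 0 < p x ∧ p x < 1) :
    ∀ z > (0 : ℝ), ∀ w < (0 : ℝ),
      taxPost p (expDen lam) w z =
        (∫ x in Iic w, Real.exp ((1 + lam) * x) * (1 - p x)) /
          (∫ y in Iic (0 : ℝ), Real.exp ((1 + lam) * y) * (1 - p y)) ∧
      taxPostZero p (expDen lam) w < taxPost p (expDen lam) w z := by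
  intro z hz w hw
  set f : ℝ → ℝ := fun x => Real.exp ((1 + lam) * x) * (1 - p x) with hfdef
  have hmeas : Measurable f :=
    ((measurable_const.mul measurable_id).exp).mul (measurable_const.sub hpmeas)
  -- integrability of f on subsets of Iic 0
  have hint : ∀ s ⊆ Iic (0 : ℝ), MeasurableSet s → IntegrableOn f s := by
    intro s hs hms
    refine Integrable.mono' ((integrableOn_exp_Iic (0 : ℝ)).mono_set hs)
      hmeas.aestronglyMeasurable.restrict ?_
    filter_upwards [ae_restrict_mem hms] with x hx
    have hx0 : x ≤ 0 := hs hx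
    obtain ⟨h1, h2⟩ := hp x hx0
    have hpos : (0:ℝ) < 1 - p x := by linarith
    have h3 : (1 + lam) * x ≤ x := by nlinarith
    rw [Real.norm_eq_abs, abs_of_nonneg (by positivity)]
    calc Real.exp ((1 + lam) * x) * (1 - p x) ≤ Real.exp ((1 + lam) * x) * 1 := by
          nlinarith [Real.exp_pos ((1 + lam) * x)]
      _ ≤ Real.exp x := by rw [mul_one]; exact Real.exp_le_exp.2 h3
  -- positivity of the integrals
  have hpos : ∀ s ⊆ Iic (0 : ℝ), MeasurableSet s → volume s = ⊤ → 0 < ∫ x in s, f x := by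
    intro s hs hms hvol
    have hnn : 0 ≤ᵐ[volume.restrict s] f := by
      filter_upwards [ae_restrict_mem hms] with x hx
      obtain ⟨_, h2⟩ := hp x (hs hx)
      have : (0:ℝ) < 1 - p x := by linarith
      positivity
    rw [setIntegral_pos_iff_support_of_nonneg_ae hnn (hint s hs hms)]
    have hsub : s ⊆ Function.support f ∩ s := by
      intro x hx
      refine ⟨?_, hx⟩
      obtain ⟨_, h2⟩ := hp x (hs hx)
      have : (0:ℝ) < 1 - p x := by linarith
      simp only [Function.mem_support, hfdef]
      positivity
    exact lt_of_lt_of_le (by simp : (0:ENNReal) < ⊤) (hvol ▸ measure_mono hsub)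
  have hIw : Iic w ⊆ Iic (0 : ℝ) := Iic_subset_Iic.2 hw.le
  have hA : 0 < ∫ x in Iic w, f x := hpos _ hIw measurableSet_Iic Real.volume_Iic
  have hB : 0 < ∫ x in Iic (0:ℝ), f x := hpos _ subset_rfl measurableSet_Iic Real.volume_Iic
  set A := ∫ x in Iic w, f x
  set B := ∫ x in Iic (0:ℝ), f x
  -- rewrite taxPost integrands
  have key : ∀ v ≤ (0:ℝ), (∫ x in Iic v, Real.exp x * (1 - p x) * expDen lam (z - x)) =
      (lam * Real.exp (-lam * z)) * ∫ x in Iic v, f x := by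
    intro v hv
    rw [← MeasureTheory.integral_const_mul]
    refine setIntegral_congr_fun measurableSet_Iic (fun x hx => ?_)
    have hx0 : x ≤ 0 := le_trans hx hv
    have hge : 0 ≤ z - x := by linarith
    simp only [expDen, if_pos hge, hfdef]
    rw [show -lam * (z - x) = -lam * z + lam * x by ring, Real.exp_add,
      show (1 + lam) * x = x + lam * x by ring, Real.exp_add]
    ring
  have keyz : ∀ v ≤ (0:ℝ), (∫ x in Iic v, Real.exp x * (1 - p x) * expDen lam (-x)) =
      lam * ∫ x in Iic v, f x := by
    intro v hv
    rw [← MeasureTheory.integral_const_mul]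
    refine setIntegral_congr_fun measurableSet_Iic (fun x hx => ?_)
    have hx0 : x ≤ 0 := le_trans hx hv
    have hge : 0 ≤ -x := by linarith
    simp only [expDen, if_pos hge, hfdef]
    rw [show -lam * -x = lam * x by ring, show (1 + lam) * x = x + lam * x by ring,
      Real.exp_add]
    ring
  have hc : (0:ℝ) < lam * Real.exp (-lam * z) := by positivity
  have hTP : taxPost p (expDen lam) w z = A / B := by
    rw [taxPost, key w hw.le, key 0 le_rfl, mul_div_mul_left _ _ hc.ne']
  have hTPZ : taxPostZero p (expDen lam) w = (lam * A) / (p 0 + lam * B) := by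
    rw [taxPostZero, keyz w hw.le, keyz 0 le_rfl]
  refine ⟨hTP, ?_⟩
  rw [hTP, hTPZ]
  have hp0 : 0 < p 0 := (hp 0 le_rfl).1
  rw [div_lt_div_iff₀ (by positivity) hB]
  nlinarith
end
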